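/- arXiv:1212.2930 — 2 statements merged into one kernel-verified Lean document; each statement's English description precedes it below -/
import Mathlib

section
/- Let p be an odd prime, t ≥ 1, and let a be an integer with gcd(a,p) = 1. If the Legendre symbol (a/p) = 1, then #S̄_2(a;p^t) = (p−3)p^{t−1}/2 + p^{t−1}/(p+1) + 3/2 + (−1)^{t−1}(p−1)/(2(p+1)). If (a/p) = −1, then #S̄_2(a;p^t) = φ(p^t)/2, where φ is Euler's totient function. -/
/-- The reduced coordinate sumset `S̄_2(a;n)` of the modular hyperbola `H_2(a;n)`. -/
def coordSumset (a : ℤ) (n : ℕ) : Set (ZMod n) :=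
  {s | ∃ x y : ℤ, x * y ≡ a [ZMOD (n : ℤ)] ∧ 1 ≤ x ∧ x < n ∧ 1 ≤ y ∧ y < n ∧
    s = ((x + y : ℤ) : ZMod n)}

/-!
When `2` and `a` are units mod `N`, the sums `x + y` with `x * y = a` are exactly the `s` for
which `s ^ 2 - 4 * a` is a square, so we count such `s ∈ ℤ/p^t` fibre by fibre over `ℤ/p`.
If `x ≢ 0`, then `s ↦ s ^ 2 - 4 * a` is injective on the fibre over `x` (as `s + s' ≡ 2x` is a
unit), hence a bijection onto the fibre over `x ^ 2 - 4 * a`, both having `p ^ (t - 1)` elements.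
Consequently a unit is a square iff its residue is, each `x` with `x ^ 2 ≠ 4a` contributes
`p ^ (t - 1)` or `0`, and each of the `1 + (a/p)` roots of `x ^ 2 = 4a` contributes the number
`Q_t` of squares in `pℤ/p^t`. The character sum `∑ₓ χ(x ^ 2 - 4a) = -1` then gives the count.
Finally the squares in `pℤ/p^(t+2)` are `p ^ 2` times the squares, and `p ^ 2 * z` only
depends on `z mod p^t`, so `Q_(t+2)` is the number of squares in `ℤ/p^t`; this yields
`Q_(t+2) = Q_t + (p - 1) p ^ (t - 1) / 2` and the closed form.
-/

open Finset

theorem exists_add_eq_mul_eq_iff_isSquare {R : Type*} [CommRing R] (h2 : IsUnit (2 : R))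
    (s c : R) : (∃ x y, x + y = s ∧ x * y = c) ↔ IsSquare (s ^ 2 - 4 * c) := by
  constructor
  · rintro ⟨x, y, rfl, rfl⟩
    exact ⟨x - y, by ring⟩
  · rintro ⟨r, hr⟩
    have hi : (2 : R) * ↑h2.unit⁻¹ = 1 := h2.mul_val_inv
    refine ⟨(s + r) * ↑h2.unit⁻¹, (s - r) * ↑h2.unit⁻¹, ?_, ?_⟩
    · linear_combination s * hi
    · linear_combination (↑h2.unit⁻¹ : R) ^ 2 * hr + c * (2 * ↑h2.unit⁻¹ + 1) * hi

section FiniteField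

variable {F : Type*} [Field F] [Fintype F] [DecidableEq F]

theorem card_mul_eq_of_ne_zero {A : F} (hA : A ≠ 0) :
    #{z : F × F | z.1 * z.2 = A} = Fintype.card F - 1 := by
  have hx {x y : F} (h : x * y = A) : x ≠ 0 := left_ne_zero_of_mul (h ▸ hA)
  rw [← card_univ, ← card_erase_of_mem (mem_univ 0)]
  refine card_nbij' Prod.fst (fun x => (x, x⁻¹ * A)) ?_ ?_ ?_ ?_
  · rintro ⟨x, y⟩ h
    simpa using hx (by simpa using h)
  · intro x hx
    simp_all
  · rintro ⟨x, y⟩ h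
    simp only [coe_filter, mem_univ, true_and, Set.mem_ofPred_eq] at h
    simp [← h, hx h]
  · intro x _
    rfl

theorem sum_quadraticChar_sq_sub (hF : ringChar F ≠ 2) {A : F} (hA : A ≠ 0) :
    ∑ x : F, quadraticChar F (x ^ 2 - A) = -1 := by
  have h2 : (2 : F) ≠ 0 := Ring.two_ne_zero hF
  have hpairs : #{z : F × F | z.2 ^ 2 = z.1 ^ 2 - A} = #{z : F × F | z.1 * z.2 = A} := by
    refine card_nbij' (fun z => (z.1 + z.2, z.1 - z.2))
      (fun w => ((w.1 + w.2) / 2, (w.1 - w.2) / 2)) ?_ ?_ ?_ ?_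
    · intro z hz; simp only [coe_filter, mem_univ, true_and, Set.mem_ofPred_eq] at hz ⊢
      linear_combination -hz
    · intro w hw; simp only [coe_filter, mem_univ, true_and, Set.mem_ofPred_eq] at hw ⊢
      field_simp; linear_combination -4 * hw
    · intro z _; ext <;> field_simp <;> ring
    · intro w _; ext <;> field_simp <;> ring
  have hfib : #{z : F × F | z.2 ^ 2 = z.1 ^ 2 - A} = ∑ x : F, #{r : F | r ^ 2 = x ^ 2 - A} := by
    rw [card_eq_sum_card_fiberwise (f := Prod.fst) (t := univ) (fun _ _ => mem_univ _)]
    refine sum_congr rfl fun x _ => card_nbij' Prod.snd (fun r => (x, r)) ?_ ?_ ?_ ?_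
    · rintro ⟨y, r⟩ h; simp_all
    · intro r hr; simp_all
    · rintro ⟨y, r⟩ h; simp_all
    · intro r _; rfl
  have hsqrt (x : F) : (#{r : F | r ^ 2 = x ^ 2 - A} : ℤ) = quadraticChar F (x ^ 2 - A) + 1 := by
    rw [← quadraticChar_card_sqrts hF, Set.toFinset_ofPred]
  have hcard := congrArg (fun n : ℕ => (n : ℤ)) (hpairs.symm.trans hfib)
  simp only [card_mul_eq_of_ne_zero hA, Nat.cast_sum, hsqrt, sum_add_distrib] at hcard
  have : 0 < Fintype.card F := Fintype.card_pos
  rw [sum_const, card_univ, Nat.cast_sub this] at hcard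
  simp only [Nat.cast_one, nsmul_eq_mul, mul_one] at hcard
  linarith

end FiniteField

theorem coordSumset_eq {a : ℤ} {N : ℕ} (hN : 1 < N) (ha : IsUnit (a : ZMod N)) :
    coordSumset a N = {s | ∃ x y : ZMod N, x + y = s ∧ x * y = a} := by
  have : NeZero N := ⟨by omega⟩
  have : Nontrivial (ZMod N) := ZMod.nontrivial_iff.mpr (by omega)
  ext s
  constructor
  · rintro ⟨x, y, hxy, -, -, -, -, rfl⟩
    refine ⟨x, y, by push_cast; rfl, ?_⟩
    rw [← Int.cast_mul, (ZMod.intCast_eq_intCast_iff _ _ _).mpr hxy]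
  · rintro ⟨x, y, rfl, hxy⟩
    have hx : x ≠ 0 := by rintro rfl; simp [← hxy] at ha
    have hy : y ≠ 0 := by rintro rfl; simp [← hxy] at ha
    have hxv : x.val ≠ 0 := (ZMod.val_ne_zero x).mpr hx
    have hyv : y.val ≠ 0 := (ZMod.val_ne_zero y).mpr hy
    refine ⟨x.val, y.val, ?_, by omega, by exact_mod_cast x.val_lt, by omega,
      by exact_mod_cast y.val_lt, by push_cast; simp⟩
    rw [← ZMod.intCast_eq_intCast_iff, ← hxy]
    push_cast
    simp

variable {p : ℕ} [hp : Fact p.Prime] {n : ℕ}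

theorem ringChar_zmod_ne_two (hp2 : p ≠ 2) : ringChar (ZMod p) ≠ 2 := by
  rwa [ZMod.ringChar_zmod_n]

variable (p n) in
def modP : ZMod (p ^ (n + 1)) →+* ZMod p :=
  ZMod.castHom (dvd_pow_self p n.succ_ne_zero) (ZMod p)

theorem modP_apply (z : ZMod (p ^ (n + 1))) : modP p n z = z.val := by
  rw [modP, ZMod.castHom_apply, ZMod.cast_eq_val]

theorem modP_surjective : Function.Surjective (modP p n) :=
  ZMod.castHom_surjective _

theorem isUnit_iff_modP_ne_zero {z : ZMod (p ^ (n + 1))} : IsUnit z ↔ modP p n z ≠ 0 := by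
  rw [modP_apply, Ne, ZMod.natCast_eq_zero_iff, ← ZMod.isUnit_natCast_iff_not_dvd_pow hp.out
    n.succ_pos, ZMod.natCast_zmod_val]

theorem exists_eq_mul_of_modP_eq_zero {z : ZMod (p ^ (n + 1))} (hz : modP p n z = 0) :
    ∃ w, z = p * w := by
  rw [modP_apply, ZMod.natCast_eq_zero_iff] at hz
  obtain ⟨w, hw⟩ := hz
  exact ⟨w, by rw [← ZMod.natCast_zmod_val z, hw, Nat.cast_mul]⟩

theorem card_fiber_modP (y : ZMod p) : #{z : ZMod (p ^ (n + 1)) | modP p n z = y} = p ^ n := by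
  have hfib (y : ZMod p) : #{z : ZMod (p ^ (n + 1)) | modP p n z = y} =
      #{z : ZMod (p ^ (n + 1)) | modP p n z = 0} :=
    AddMonoidHom.card_fiber_eq_of_mem_range (modP p n).toAddMonoidHom
      (modP_surjective y) (modP_surjective 0)
  have hsum : p ^ (n + 1) = p * #{z : ZMod (p ^ (n + 1)) | modP p n z = 0} := by
    conv_lhs => rw [← ZMod.card (p ^ (n + 1))]
    rw [← card_univ,
      card_eq_sum_card_fiberwise (f := modP p n) (t := univ) fun _ _ => mem_univ _]
    simp [hfib]
  rw [hfib, ← Nat.mul_left_cancel_iff hp.out.pos, ← hsum, pow_succ']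

theorem injOn_sq_fiber (hp2 : p ≠ 2) {x : ZMod p} (hx : x ≠ 0) (c : ZMod (p ^ (n + 1))) :
    Set.InjOn (fun s => s ^ 2 + c) {s | modP p n s = x} := by
  intro s hs s' hs' h
  have hunit : IsUnit (s + s') := by
    rw [isUnit_iff_modP_ne_zero, map_add, hs, hs', ← two_mul]
    exact mul_ne_zero (Ring.two_ne_zero (ringChar_zmod_ne_two hp2)) hx
  have : (s - s') * (s + s') = 0 := by linear_combination h
  exact sub_eq_zero.mp ((hunit.mul_left_eq_zero).mp this)

/-- This is the Hensel step: an injective map between fibres of the same size `p ^ n` is onto. -/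
theorem image_sq_add_fiber (hp2 : p ≠ 2) {x : ZMod p} (hx : x ≠ 0) (c : ZMod (p ^ (n + 1))) :
    ({s | modP p n s = x} : Finset _).image (fun s => s ^ 2 + c) =
      ({d | modP p n d = x ^ 2 + modP p n c} : Finset _) := by
  refine eq_of_subset_of_card_le ?_ ?_
  · intro d hd
    obtain ⟨s, hs, rfl⟩ := mem_image.mp hd
    simp_all
  · rw [card_image_of_injOn (by simpa using injOn_sq_fiber hp2 hx c), card_fiber_modP,
      card_fiber_modP]

theorem card_fiber_filter_sq_add (hp2 : p ≠ 2) {x : ZMod p} (hx : x ≠ 0)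
    (c : ZMod (p ^ (n + 1))) (P : ZMod (p ^ (n + 1)) → Prop) [DecidablePred P] :
    #{s | modP p n s = x ∧ P (s ^ 2 + c)} = #{d | modP p n d = x ^ 2 + modP p n c ∧ P d} := by
  rw [← filter_filter, ← filter_filter, ← image_sq_add_fiber hp2 hx c, filter_image,
    card_image_of_injOn ((injOn_sq_fiber hp2 hx c).mono fun s hs => by simp_all)]

theorem isSquare_iff_of_modP_ne_zero (hp2 : p ≠ 2) {d : ZMod (p ^ (n + 1))}
    (hd : modP p n d ≠ 0) : IsSquare d ↔ IsSquare (modP p n d) := by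
  refine ⟨fun h => h.map (modP p n), fun ⟨b, hb⟩ => ?_⟩
  have hb0 : b ≠ 0 := by rintro rfl; simp_all
  have : d ∈ ({s | modP p n s = b} : Finset _).image (fun s => s ^ 2 + 0) := by
    rw [image_sq_add_fiber hp2 hb0]; simp [hb, sq]
  obtain ⟨s, -, hs⟩ := mem_image.mp this
  exact ⟨s, by rw [← hs]; ring⟩

theorem card_fiber_filter_of_forall_iff {x : ZMod p} {P : ZMod (p ^ (n + 1)) → Prop}
    [DecidablePred P] {Q : Prop} [Decidable Q] (h : ∀ s, modP p n s = x → (P s ↔ Q)) :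
    #{s | modP p n s = x ∧ P s} = if Q then p ^ n else 0 := by
  split_ifs with hQ
  · refine (congrArg card (filter_congr fun s _ => ?_)).trans (card_fiber_modP x)
    exact ⟨And.left, fun hs => ⟨hs, (h s hs).mpr hQ⟩⟩
  · exact card_eq_zero.mpr (filter_eq_empty_iff.mpr fun s _ hs => hQ ((h s hs.1).mp hs.2))

variable (p n) in
def sqFiberCard (y : ZMod p) : ℕ := #{d : ZMod (p ^ (n + 1)) | modP p n d = y ∧ IsSquare d}

theorem sqFiberCard_of_ne_zero (hp2 : p ≠ 2) {y : ZMod p} (hy : y ≠ 0) :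
    sqFiberCard p n y = if IsSquare y then p ^ n else 0 :=
  card_fiber_filter_of_forall_iff fun d hd => by
    rw [isSquare_iff_of_modP_ne_zero hp2 (hd ▸ hy), hd]

theorem two_mul_sqFiberCard (hp2 : p ≠ 2) (y : ZMod p) :
    2 * (sqFiberCard p n y : ℤ) = p ^ n * (quadraticChar (ZMod p) y + 1) +
      if y = 0 then 2 * (sqFiberCard p n 0 : ℤ) - p ^ n else 0 := by
  by_cases hy : y = 0
  · simp [hy]
  · rw [sqFiberCard_of_ne_zero hp2 hy, if_neg hy, quadraticChar_apply, quadraticCharFun,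
      if_neg hy]
    split_ifs <;> push_cast <;> ring

theorem card_fiber_isSquare_sq_add (hp2 : p ≠ 2) {c : ZMod (p ^ (n + 1))}
    (hc : modP p n c ≠ 0) (x : ZMod p) :
    #{s | modP p n s = x ∧ IsSquare (s ^ 2 + c)} = sqFiberCard p n (x ^ 2 + modP p n c) := by
  by_cases hx : x = 0
  · subst hx
    rw [zero_pow two_ne_zero, zero_add, sqFiberCard_of_ne_zero hp2 hc]
    refine card_fiber_filter_of_forall_iff fun s hs => ?_
    have hs2 : modP p n (s ^ 2 + c) = modP p n c := by simp [hs]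
    rw [isSquare_iff_of_modP_ne_zero hp2 (hs2 ▸ hc), hs2]
  · exact card_fiber_filter_sq_add hp2 hx c IsSquare

theorem two_mul_card_isSquare_sq_add (hp2 : p ≠ 2) {c : ZMod (p ^ (n + 1))}
    (hc : modP p n c ≠ 0) :
    2 * (#{s : ZMod (p ^ (n + 1)) | IsSquare (s ^ 2 + c)} : ℤ) = p ^ n * (p - 1) +
      (quadraticChar (ZMod p) (-modP p n c) + 1) * (2 * sqFiberCard p n 0 - p ^ n) := by
  have hfib : #{s : ZMod (p ^ (n + 1)) | IsSquare (s ^ 2 + c)} =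
      ∑ x : ZMod p, sqFiberCard p n (x ^ 2 + modP p n c) := by
    rw [card_eq_sum_card_fiberwise (f := modP p n) (t := univ) fun _ _ => mem_univ _]
    refine sum_congr rfl fun x _ => ?_
    rw [filter_filter, ← card_fiber_isSquare_sq_add hp2 hc x]
    simp only [and_comm]
  have hsum : ∑ x : ZMod p, quadraticChar (ZMod p) (x ^ 2 + modP p n c) = -1 := by
    simpa using sum_quadraticChar_sq_sub (ringChar_zmod_ne_two hp2) (neg_ne_zero.mpr hc)
  have hroots : (#{x : ZMod p | x ^ 2 + modP p n c = 0} : ℤ) =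
      quadraticChar (ZMod p) (-modP p n c) + 1 := by
    rw [← quadraticChar_card_sqrts (ringChar_zmod_ne_two hp2), Set.toFinset_ofPred]
    simp only [eq_neg_iff_add_eq_zero]
  rw [hfib, Nat.cast_sum, mul_sum, sum_congr rfl fun x _ => two_mul_sqFiberCard hp2 _,
    sum_add_distrib, ← mul_sum, sum_add_distrib, hsum, sum_const, card_univ, ZMod.card, sum_ite,
    sum_const_zero, sum_const, ← hroots, nsmul_eq_mul, nsmul_eq_mul]
  ring

theorem sqFiberCard_succ_zero (n : ℕ) :
    sqFiberCard p (n + 1) 0 = #{e : ZMod (p ^ n) | IsSquare e} := by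
  have hpn : p ^ (n + 1 + 1) = p ^ 2 * p ^ n := by ring
  have hp0 : p ^ 2 ≠ 0 := pow_ne_zero 2 hp.out.ne_zero
  let π := ZMod.castHom (pow_dvd_pow p (by omega : n ≤ n + 1 + 1)) (ZMod (p ^ n))
  -- `p ^ 2 * z` only depends on `z mod p ^ n`, so it factors through `π` as `ι`.
  let ι : ZMod (p ^ n) → ZMod (p ^ (n + 1 + 1)) := fun e => ((p ^ 2 * e.val : ℕ) : _)
  have hι : Function.Injective ι := by
    intro e e' h
    rw [ZMod.natCast_eq_natCast_iff, hpn] at h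
    rw [← ZMod.natCast_zmod_val e, ← ZMod.natCast_zmod_val e', ZMod.natCast_eq_natCast_iff]
    exact Nat.ModEq.mul_left_cancel' hp0 h
  have hιπ (z : ZMod (p ^ (n + 1 + 1))) : ι (π z) = p ^ 2 * z := by
    rw [← ZMod.natCast_zmod_val z, map_natCast, ← Nat.cast_pow, ← Nat.cast_mul,
      ZMod.natCast_eq_natCast_iff, ZMod.val_natCast]
    have := (Nat.mod_modEq z.val (p ^ n)).mul_left' (p ^ 2)
    rwa [← hpn] at this
  have hmodP_p : modP p (n + 1) p = 0 := by simp
  have himage : ({d : ZMod (p ^ (n + 1 + 1)) | modP p (n + 1) d = 0 ∧ IsSquare d} : Finset _) =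
      ({e : ZMod (p ^ n) | IsSquare e} : Finset _).image ι := by
    ext d
    simp only [mem_filter, mem_univ, true_and, mem_image]
    constructor
    · rintro ⟨hd, r, rfl⟩
      rw [map_mul, mul_self_eq_zero] at hd
      obtain ⟨w, rfl⟩ := exists_eq_mul_of_modP_eq_zero hd
      exact ⟨π (w * w), ⟨π w, map_mul _ _ _⟩, by rw [hιπ]; ring⟩
    · rintro ⟨_, ⟨f, rfl⟩, rfl⟩
      obtain ⟨g, rfl⟩ := ZMod.ringHom_surjective π f
      rw [← map_mul, hιπ]
      exact ⟨by simp [hmodP_p], p * g, by ring⟩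
  rw [sqFiberCard, himage, card_image_of_injective _ hι]

theorem sqFiberCard_zero_zero : sqFiberCard p 0 0 = 1 := by
  rw [sqFiberCard, card_eq_one]
  refine ⟨0, eq_singleton_iff_unique_mem.mpr ⟨by simp, fun d hd => ?_⟩⟩
  obtain ⟨w, rfl⟩ := exists_eq_mul_of_modP_eq_zero (mem_filter.mp hd).2.1
  rw [show ((p : ℕ) : ZMod (p ^ (0 + 1))) = 0 by rw [ZMod.natCast_eq_zero_iff, pow_one], zero_mul]

theorem two_mul_card_isSquare (hp2 : p ≠ 2) (n : ℕ) :
    2 * (#{e : ZMod (p ^ (n + 1)) | IsSquare e} : ℤ) =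
      2 * sqFiberCard p n 0 + p ^ n * (p - 1) := by
  rw [card_eq_sum_card_fiberwise (f := modP p n) (t := univ) fun _ _ => mem_univ _]
  simp only [filter_filter, and_comm (a := IsSquare _), Nat.cast_sum, mul_sum]
  change ∑ y, 2 * (sqFiberCard p n y : ℤ) = _
  rw [sum_congr rfl fun y _ => two_mul_sqFiberCard hp2 y, sum_add_distrib, ← mul_sum,
    sum_add_distrib, quadraticChar_sum_zero (ringChar_zmod_ne_two hp2)]
  simp only [sum_const, card_univ, ZMod.card, nsmul_eq_mul, mul_one, zero_add, sum_ite_eq',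
    mem_univ, if_true]
  ring

theorem two_mul_sqFiberCard_zero (hp2 : p ≠ 2) : ∀ n : ℕ,
    2 * (sqFiberCard p n 0 : ℚ) =
      p ^ n / (p + 1) + 3 / 2 + (-1) ^ n * (p - 1) / (2 * (p + 1))
  | 0 => by
    have : (p : ℚ) + 1 ≠ 0 := by positivity
    rw [sqFiberCard_zero_zero]
    field_simp
    ring
  | 1 => by
    have : (p : ℚ) + 1 ≠ 0 := by positivity
    have : Subsingleton (ZMod (p ^ 0)) := by rw [pow_zero]; infer_instance
    rw [sqFiberCard_succ_zero, filter_true_of_mem fun e _ => ⟨0, Subsingleton.elim _ _⟩,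
      card_univ, ZMod.card, pow_zero, Nat.cast_one]
    field_simp
    ring
  | n + 2 => by
    have : (p : ℚ) + 1 ≠ 0 := by positivity
    have hrec := two_mul_card_isSquare hp2 n
    rw [← sqFiberCard_succ_zero] at hrec
    have hrec' : 2 * (sqFiberCard p (n + 2) 0 : ℚ) = 2 * sqFiberCard p n 0 + p ^ n * (p - 1) := by
      exact_mod_cast hrec
    rw [hrec', two_mul_sqFiberCard_zero hp2 n]
    field_simp
    ring

theorem two_mul_ncard_coordSumset (hp2 : p ≠ 2) {a : ℤ} (ha : (a : ZMod p) ≠ 0) (n : ℕ) :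
    2 * ((coordSumset a (p ^ (n + 1))).ncard : ℤ) =
      p ^ n * (p - 1) + (legendreSym p a + 1) * (2 * sqFiberCard p n 0 - p ^ n) := by
  have h2 : (2 : ZMod p) ≠ 0 := Ring.two_ne_zero (ringChar_zmod_ne_two hp2)
  have hmodP : modP p n (-4 * a) = -(2 ^ 2 * a) := by
    rw [map_mul, map_neg, map_ofNat, map_intCast]
    ring
  have hset : coordSumset a (p ^ (n + 1)) =
      {s | IsSquare (s ^ 2 + -4 * (a : ZMod (p ^ (n + 1))))} := by
    rw [coordSumset_eq (Nat.one_lt_pow n.succ_ne_zero hp.out.one_lt)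
      (isUnit_iff_modP_ne_zero.mpr (by rwa [map_intCast]))]
    ext s
    rw [Set.mem_ofPred_eq, Set.mem_ofPred_eq, exists_add_eq_mul_eq_iff_isSquare
      (isUnit_iff_modP_ne_zero.mpr (by rwa [map_ofNat])), neg_mul, ← sub_eq_add_neg]
  have hχ : quadraticChar (ZMod p) (-modP p n (-4 * a)) = legendreSym p a := by
    rw [hmodP, neg_neg, map_mul, quadraticChar_sq_one' h2, one_mul, legendreSym]
  rw [hset, Set.ncard_eq_toFinset_card', Set.toFinset_ofPred, two_mul_card_isSquare_sq_add hp2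
    (hmodP ▸ neg_ne_zero.mpr (mul_ne_zero (pow_ne_zero 2 h2) ha)), hχ]

theorem stmt9 (p : ℕ) [hp : Fact p.Prime] (hp2 : p ≠ 2) (t : ℕ) (ht : 1 ≤ t)
    (a : ℤ) (ha : IsCoprime a (p : ℤ)) :
    (legendreSym p a = 1 →
      ((coordSumset a (p ^ t)).ncard : ℚ) =
        ((p : ℚ) - 3) * (p : ℚ) ^ (t - 1) / 2 + (p : ℚ) ^ (t - 1) / ((p : ℚ) + 1) + 3 / 2 +
          (-1 : ℚ) ^ (t - 1) * ((p : ℚ) - 1) / (2 * ((p : ℚ) + 1))) ∧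
    (legendreSym p a = -1 →
      ((coordSumset a (p ^ t)).ncard : ℚ) = (Nat.totient (p ^ t) : ℚ) / 2) := by
  obtain ⟨n, rfl⟩ : ∃ n, t = n + 1 := ⟨t - 1, by omega⟩
  have ha0 : (a : ZMod p) ≠ 0 :=
    (isCoprime_zero_right.mp (by simpa using ha.map (Int.castRingHom (ZMod p)))).ne_zero
  have key : 2 * ((coordSumset a (p ^ (n + 1))).ncard : ℚ) =
      p ^ n * (p - 1) + (legendreSym p a + 1) * (2 * sqFiberCard p n 0 - p ^ n) := by
    exact_mod_cast two_mul_ncard_coordSumset hp2 ha0 n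
  rw [Nat.add_sub_cancel, Nat.totient_prime_pow_succ hp.out, Nat.cast_mul, Nat.cast_pow,
    Nat.cast_sub hp.out.one_le, Nat.cast_one]
  constructor
  · intro h
    rw [h, two_mul_sqFiberCard_zero hp2] at key
    push_cast at key
    linarith
  · intro h
    rw [h] at key
    push_cast at key
    linarith
end

section
/- Let p be a prime with p ≡ 1 (mod 4), let k ≥ 1, and let a be an integer with gcd(a,p) = 1. Then c_2(a;p^k) = 1, i.e., #S̄_2(a;p^k) = #D̄_2(a;p^k). -/
/-- The reduced coordinate difference set `D̄_2(a;n)` of the modular hyperbola `H_2(a;n)`. -/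
def coordDiffset (a : ℤ) (n : ℕ) : Set (ZMod n) :=
  {s | ∃ x y : ℤ, x * y ≡ a [ZMOD (n : ℤ)] ∧ 1 ≤ x ∧ x < n ∧ 1 ≤ y ∧ y < n ∧
    s = ((x - y : ℤ) : ZMod n)}

/-- The ratio `c_2(a;n) = #S̄_2(a;n) / #D̄_2(a;n)`. -/
noncomputable def c2 (a : ℤ) (n : ℕ) : ℚ :=
  ((coordSumset a n).ncard : ℚ) / ((coordDiffset a n).ncard : ℚ)

/-! Multiplication by a square root `i` of `-1` modulo `p ^ k` maps the sums `x + y` of points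
of the hyperbola `x y = a` bijectively onto the differences, since `(x, y) ↦ (i x, -i y)`
preserves the hyperbola and sends `x + y` to `i (x + y) = i x - (-i y)`. Such an `i` exists for
`p ≡ 1 (mod 4)`: `-1` is a square modulo `p`, and Hensel's lemma lifts the root. -/

open Polynomial

theorem ZMod.exists_mul_self_eq_neg_one_of_prime_pow {p : ℕ} [hp : Fact p.Prime]
    (hp4 : p % 4 = 1) (k : ℕ) : ∃ i : ZMod (p ^ k), i * i = -1 := by
  obtain ⟨r, hr⟩ := ZMod.exists_sq_eq_neg_one_iff.mpr (by omega : p % 4 ≠ 3)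
  set m : ℤ := (r.val : ℤ)
  obtain ⟨c, hc⟩ : (p : ℤ) ∣ m * m + 1 := by
    rw [← ZMod.intCast_zmod_eq_zero_iff_dvd]
    simp [m, ← hr]
  have hcop : IsCoprime (2 * m) p := by
    refine IsCoprime.mul_left ?_ ⟨-m, c, by linear_combination -hc⟩
    exact Nat.isCoprime_iff_coprime.mpr ((Nat.coprime_primes Nat.prime_two hp.out).mpr (by omega))
  have heval : aeval (m : ℤ_[p]) (X ^ 2 + 1 : ℤ[X]) = ((m * m + 1 : ℤ) : ℤ_[p]) := by
    simp [sq]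
  have hderiv : aeval (m : ℤ_[p]) (derivative (X ^ 2 + 1 : ℤ[X])) = ((2 * m : ℤ) : ℤ_[p]) := by
    simp [map_ofNat]
  obtain ⟨z, hz, -⟩ := hensels_lemma (F := (X ^ 2 + 1 : ℤ[X])) (a := (m : ℤ_[p])) (by
    rw [heval, hderiv, PadicInt.norm_intCast_eq_one_iff.mpr hcop, one_pow]
    exact PadicInt.norm_intCast_lt_one_iff.mpr ⟨c, hc⟩)
  refine ⟨PadicInt.toZModPow k z, ?_⟩
  rw [← map_mul, ← map_one (PadicInt.toZModPow k), ← map_neg]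
  congr 1
  simp only [map_add, map_pow, aeval_X, map_one] at hz
  linear_combination hz

section Hyperbola

variable {R : Type*} [CommRing R]

def hyperbolaImage (f : R → R → R) (a : R) : Set R :=
  {s | ∃ x y : R, x ≠ 0 ∧ y ≠ 0 ∧ x * y = a ∧ s = f x y}

theorem hyperbolaImage_nonempty [Nontrivial R] (f : R → R → R) {a : R} (ha : IsUnit a) :
    (hyperbolaImage f a).Nonempty :=
  ⟨f a 1, a, 1, ha.ne_zero, one_ne_zero, mul_one a, rfl⟩

theorem isUnit_of_mul_self_eq_neg_one {i : R} (hi : i * i = -1) : IsUnit i :=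
  IsUnit.of_mul_eq_one (-i) (by linear_combination -hi)

theorem image_mul_hyperbolaImage_add {i : R} (hi : i * i = -1) (a : R) :
    (i * ·) '' hyperbolaImage (· + ·) a = hyperbolaImage (· - ·) a := by
  have hi0 {x : R} (hx : x ≠ 0) : i * x ≠ 0 :=
    (isUnit_of_mul_self_eq_neg_one hi).mul_right_eq_zero.not.mpr hx
  ext d
  constructor
  · rintro ⟨_, ⟨x, y, hx, hy, rfl, rfl⟩, rfl⟩
    exact ⟨i * x, -(i * y), hi0 hx, neg_ne_zero.mpr (hi0 hy),
      by linear_combination -x * y * hi, by ring⟩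
  · rintro ⟨x, y, hx, hy, rfl, rfl⟩
    exact ⟨-(i * x) + i * y, ⟨-(i * x), i * y, neg_ne_zero.mpr (hi0 hx), hi0 hy,
      by linear_combination -x * y * hi, rfl⟩, by linear_combination (y - x) * hi⟩

theorem ncard_hyperbolaImage_add {i : R} (hi : i * i = -1) (a : R) :
    (hyperbolaImage (· + ·) a).ncard = (hyperbolaImage (· - ·) a).ncard := by
  rw [← image_mul_hyperbolaImage_add hi,
    Set.ncard_image_of_injective _ (isUnit_of_mul_self_eq_neg_one hi).mul_right_injective]

end Hyperbola

section Coordinates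

variable {n : ℕ} [NeZero n]

theorem ZMod.exists_int_Ico_iff_exists_ne_zero {P : ZMod n → Prop} :
    (∃ x : ℤ, 1 ≤ x ∧ x < n ∧ P x) ↔ ∃ x : ZMod n, x ≠ 0 ∧ P x := by
  constructor
  · rintro ⟨x, hx1, hxn, hP⟩
    refine ⟨x, fun h => ?_, hP⟩
    obtain ⟨c, rfl⟩ := (ZMod.intCast_zmod_eq_zero_iff_dvd x n).mp h
    rcases le_or_gt c 0 with hc | hc <;> nlinarith
  · rintro ⟨x, hx, hP⟩
    refine ⟨x.val, ?_, by exact_mod_cast x.val_lt, by simpa using hP⟩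
    have : x.val ≠ 0 := (ZMod.val_ne_zero x).mpr hx
    omega

theorem setOf_intCast_eq_hyperbolaImage (f : ZMod n → ZMod n → ZMod n) (a : ℤ) :
    {s | ∃ x y : ℤ, x * y ≡ a [ZMOD (n : ℤ)] ∧ 1 ≤ x ∧ x < n ∧ 1 ≤ y ∧ y < n ∧
      s = f x y} = hyperbolaImage f (a : ZMod n) := by
  ext s
  simp only [Set.mem_ofPred_eq, hyperbolaImage, ← ZMod.intCast_eq_intCast_iff, Int.cast_mul]
  constructor
  · rintro ⟨x, y, hxy, hx1, hxn, hy1, hyn, rfl⟩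
    obtain ⟨x', hx', rfl⟩ := ZMod.exists_int_Ico_iff_exists_ne_zero.mp ⟨x, hx1, hxn, rfl⟩
    obtain ⟨y', hy', rfl⟩ := ZMod.exists_int_Ico_iff_exists_ne_zero.mp ⟨y, hy1, hyn, rfl⟩
    exact ⟨_, _, hx', hy', hxy, rfl⟩
  · rintro ⟨x, y, hx, hy, hxy, rfl⟩
    obtain ⟨x', hx1, hxn, rfl⟩ := ZMod.exists_int_Ico_iff_exists_ne_zero.mpr ⟨x, hx, rfl⟩
    obtain ⟨y', hy1, hyn, rfl⟩ := ZMod.exists_int_Ico_iff_exists_ne_zero.mpr ⟨y, hy, rfl⟩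
    exact ⟨x', y', hxy, hx1, hxn, hy1, hyn, rfl⟩

theorem coordSumset_eq_hyperbolaImage (a : ℤ) :
    coordSumset a n = hyperbolaImage (· + ·) (a : ZMod n) := by
  simp only [coordSumset, Int.cast_add]
  exact setOf_intCast_eq_hyperbolaImage (· + ·) a

theorem coordDiffset_eq_hyperbolaImage (a : ℤ) :
    coordDiffset a n = hyperbolaImage (· - ·) (a : ZMod n) := by
  simp only [coordDiffset, Int.cast_sub]
  exact setOf_intCast_eq_hyperbolaImage (· - ·) a

end Coordinates

theorem stmt11 (p : ℕ) (hp : p.Prime) (hp4 : p % 4 = 1) (k : ℕ) (hk : 1 ≤ k)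
    (a : ℤ) (ha : IsCoprime a (p : ℤ)) :
    c2 a (p ^ k) = 1 ∧ (coordSumset a (p ^ k)).ncard = (coordDiffset a (p ^ k)).ncard := by
  have : Fact p.Prime := ⟨hp⟩
  have : NeZero (p ^ k) := ⟨pow_ne_zero k hp.ne_zero⟩
  have : Nontrivial (ZMod (p ^ k)) :=
    ZMod.nontrivial_iff.mpr (Nat.one_lt_pow (by omega) hp.one_lt).ne'
  obtain ⟨i, hi⟩ := ZMod.exists_mul_self_eq_neg_one_of_prime_pow hp4 k
  have hcard : (coordSumset a (p ^ k)).ncard = (coordDiffset a (p ^ k)).ncard := by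
    rw [coordSumset_eq_hyperbolaImage, coordDiffset_eq_hyperbolaImage, ncard_hyperbolaImage_add hi]
  have hau : IsUnit (a : ZMod (p ^ k)) := by
    rw [ZMod.coe_int_isUnit_iff_isCoprime, Nat.cast_pow]
    exact ha.symm.pow_left
  have hD : (coordDiffset a (p ^ k)).ncard ≠ 0 := by
    rw [coordDiffset_eq_hyperbolaImage]
    exact ((Set.ncard_pos (Set.toFinite _)).mpr (hyperbolaImage_nonempty _ hau)).ne'
  refine ⟨?_, hcard⟩
  rw [c2, hcard]
  exact div_self (by exact_mod_cast hD)
end
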